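/- arXiv:0807.2907 — 5 statements merged into one kernel-verified Lean document; each statement's English description precedes it below -/
import Mathlib

section
/- Let X₁ and X₂ be Delone sets in ℝ^d with X₁ of finite type, and let π : Ω_{X₁} → Ω_{X₂} be a factor map between their hulls. Then there exists a constant s₀ > 0 such that for every ε > 0 there exists R_ε > 0 with the following property: for every R ≥ R_ε, if X and X' in Ω_{X₁} satisfy X ∩ B_{R+s₀}(0) = X' ∩ B_{R+s₀}(0), then there exists v ∈ B_ε(0) such that (π(X) − v) ∩ B_R(0) = π(X') ∩ B_R(0). -/
open Metric Set
open scoped Pointwise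

/-- Euclidean space `ℝ^d`. -/
abbrev Euc (d : ℕ) := EuclideanSpace ℝ (Fin d)

/-- The translate `X - v = {x - v : x ∈ X}` of a set of points. -/
def tr {d : ℕ} (X : Set (Euc d)) (v : Euc d) : Set (Euc d) := (fun x => x - v) '' X

/-- The translate `X + v = {x + v : x ∈ X}` of a set of points. -/
def trAdd {d : ℕ} (X : Set (Euc d)) (v : Euc d) : Set (Euc d) := (fun x => x + v) '' X

/-- `X` is an `(r,R)`-Delone set: every open ball of radius `r` contains at most one
point of `X` and every closed ball of radius `R` contains at least one point of `X`. -/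
def IsDeloneWith {d : ℕ} (r R : ℝ) (X : Set (Euc d)) : Prop :=
  0 < r ∧ 0 < R ∧
    (∀ y : Euc d, (X ∩ ball y r).Subsingleton) ∧
    (∀ y : Euc d, (X ∩ closedBall y R).Nonempty)

/-- `X` is a Delone set. -/
def IsDelone {d : ℕ} (X : Set (Euc d)) : Prop := ∃ r R : ℝ, IsDeloneWith r R X

/-- `X` is of finite type: `(X - X) ∩ B` is finite for every bounded `B`. -/
def FiniteType {d : ℕ} (X : Set (Euc d)) : Prop :=
  ∀ B : Set (Euc d), Bornology.IsBounded B → ((X - X) ∩ B).Finite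

/-- `X` is non-periodic: `X - v = X` implies `v = 0`. -/
def NonPeriodic {d : ℕ} (X : Set (Euc d)) : Prop := ∀ v : Euc d, tr X v = X → v = 0

/-- `X` is linearly repetitive with constant `L ≥ 1`: it is a Delone set and for every patch
`P = X ∩ B_ρ(x)` of `X` and every `y`, the set `X ∩ B̄_{L·diam P}(y)` contains a translate
`P - v` of `P` which is a patch of `X`. -/
def LinearlyRepetitive {d : ℕ} (L : ℝ) (X : Set (Euc d)) : Prop :=
  1 ≤ L ∧ IsDelone X ∧
    ∀ (x : Euc d) (ρ : ℝ), 0 < ρ → ∀ y : Euc d, ∃ v : Euc d,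
      tr (X ∩ ball x ρ) v ⊆ X ∩ closedBall y (L * diam (X ∩ ball x ρ)) ∧
      tr (X ∩ ball x ρ) v = X ∩ ball (x - v) ρ

/-- The set `A(X,X')` of `ε ∈ (0, 1/√2)` such that `X` and `X'` agree on the ball of radius
`1/ε` around the origin, up to translations by vectors of norm `< ε`. -/
def deloneApprox {d : ℕ} (X X' : Set (Euc d)) : Set ℝ :=
  {ε | ε ∈ Ioo (0 : ℝ) (1 / Real.sqrt 2) ∧
    ∃ v ∈ ball (0 : Euc d) ε, ∃ v' ∈ ball (0 : Euc d) ε,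
      tr X v ∩ ball (0 : Euc d) (1 / ε) = tr X' v' ∩ ball (0 : Euc d) (1 / ε)}

open Classical in
/-- The metric on Delone sets: `d(X,X') = inf A(X,X')` if `A(X,X') ≠ ∅`, else `1/√2`. -/
noncomputable def deloneDist {d : ℕ} (X X' : Set (Euc d)) : ℝ :=
  if (deloneApprox X X').Nonempty then sInf (deloneApprox X X') else 1 / Real.sqrt 2

/-- The hull `Ω_X`: the closure of the translation orbit of `X` for `deloneDist`. -/
def hullD {d : ℕ} (X : Set (Euc d)) : Set (Set (Euc d)) :=
  {Y | ∀ ε > 0, ∃ v : Euc d, deloneDist (tr X v) Y < ε}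

/-- `π` is a factor map from `Ω` to `Ω'`: it maps `Ω` onto `Ω'`, it is continuous
(w.r.t. `deloneDist`) and commutes with translations. -/
def IsFactorOn {d : ℕ} (Ω Ω' : Set (Set (Euc d))) (π : Set (Euc d) → Set (Euc d)) : Prop :=
  (∀ Y ∈ Ω, π Y ∈ Ω') ∧
  (∀ Z ∈ Ω', ∃ Y ∈ Ω, π Y = Z) ∧
  (∀ Y ∈ Ω, ∀ ε > 0, ∃ δ > 0, ∀ Z ∈ Ω, deloneDist Y Z < δ → deloneDist (π Y) (π Z) < ε) ∧
  (∀ Y ∈ Ω, ∀ v : Euc d, π (tr Y v) = tr (π Y) v)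

/-- The Voronoi cell of a point `x` of `X`. -/
def Vor {d : ℕ} (X : Set (Euc d)) (x : Euc d) : Set (Euc d) :=
  {y | ∀ x' ∈ X, ‖x - y‖ ≤ ‖x' - y‖}

/-- `X_P` for the patch `P = X ∩ B_R(x)`: the set of `v` such that `P + v` is a patch of `X`. -/
def XP {d : ℕ} (X : Set (Euc d)) (x : Euc d) (R : ℝ) : Set (Euc d) :=
  {v | trAdd (X ∩ ball x R) v = X ∩ ball (x + v) R}

/-- The Voronoi cell `V_{P,v}` of the patch `P = X ∩ B_R(x)` associated to `v ∈ X_P`. -/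
def VP {d : ℕ} (X : Set (Euc d)) (x : Euc d) (R : ℝ) (v : Euc d) : Set (Euc d) :=
  {y | ∀ u ∈ XP X x R, ‖y - (x + v)‖ ≤ ‖y - (x + u)‖}

/-- Sequential compactness of a family of point sets w.r.t. `deloneDist`. -/
def SeqCompactD {d : ℕ} (Ω : Set (Set (Euc d))) : Prop :=
  ∀ u : ℕ → Set (Euc d), (∀ n, u n ∈ Ω) →
    ∃ Y ∈ Ω, ∃ φ : ℕ → ℕ, StrictMono φ ∧
      ∀ ε > 0, ∃ N : ℕ, ∀ n ≥ N, deloneDist (u (φ n)) Y < ε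

/-- A Delone system: a translation-invariant, closed (w.r.t. `deloneDist`) set of Delone sets. -/
def IsDeloneSystem {d : ℕ} (Ω : Set (Set (Euc d))) : Prop :=
  (∀ Y ∈ Ω, IsDelone Y) ∧ (∀ Y ∈ Ω, ∀ v : Euc d, tr Y v ∈ Ω) ∧
  (∀ Y, IsDelone Y → (∀ ε > 0, ∃ Z ∈ Ω, deloneDist Y Z < ε) → Y ∈ Ω)



/-! ### Auxiliary development -/

section Aux

variable {d : ℕ}

lemma mem_tr {S : Set (Euc d)} {a z : Euc d} : z ∈ tr S a ↔ z + a ∈ S := by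
  constructor
  · rintro ⟨x, hx, rfl⟩; simpa using hx
  · intro h; exact ⟨z + a, h, by module⟩

lemma half_lt_inv_sqrt_two : (1 : ℝ) / 2 < 1 / Real.sqrt 2 := by
  have h0 : (0 : ℝ) < Real.sqrt 2 := Real.sqrt_pos.mpr (by norm_num)
  have h2 : Real.sqrt 2 < 2 := by
    nlinarith [Real.sq_sqrt (by norm_num : (2:ℝ) ≥ 0), Real.sqrt_nonneg 2]
  exact one_div_lt_one_div_of_lt h0 h2

/-- Matching predicate: `S` and `T` agree on the ball of radius `ρ` after shifts `a`, `b`. -/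
def Mt (S T : Set (Euc d)) (a b : Euc d) (ρ : ℝ) : Prop :=
  ∀ z : Euc d, ‖z‖ < ρ → (z + a ∈ S ↔ z + b ∈ T)

lemma Mt.mono {S T : Set (Euc d)} {a b : Euc d} {ρ ρ' : ℝ}
    (h : Mt S T a b ρ) (hρ : ρ' ≤ ρ) : Mt S T a b ρ' :=
  fun z hz => h z (lt_of_lt_of_le hz hρ)

lemma Mt.symm {S T : Set (Euc d)} {a b : Euc d} {ρ : ℝ}
    (h : Mt S T a b ρ) : Mt T S b a ρ :=
  fun z hz => (h z hz).symm

lemma Mt.trans {S T U : Set (Euc d)} {a b c : Euc d} {ρ : ℝ}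
    (h1 : Mt S T a b ρ) (h2 : Mt T U b c ρ) : Mt S U a c ρ :=
  fun z hz => (h1 z hz).trans (h2 z hz)

lemma Mt.shift {S T : Set (Euc d)} {a b : Euc d} {ρ : ℝ}
    (h : Mt S T a b ρ) (w : Euc d) : Mt S T (a + w) (b + w) (ρ - ‖w‖) := by
  intro z hz
  have hzw : ‖z + w‖ < ρ := by
    calc ‖z + w‖ ≤ ‖z‖ + ‖w‖ := norm_add_le _ _
    _ < ρ := by linarith
  have := h (z + w) hzw
  rwa [show z + w + a = z + (a + w) by module, show z + w + b = z + (b + w) by module] at this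

lemma Mt.congr {S T : Set (Euc d)} {a b a' b' : Euc d} {ρ : ℝ}
    (h : Mt S T a b ρ) (ha : a = a') (hb : b = b') : Mt S T a' b' ρ := by
  subst ha; subst hb; exact h

lemma mt_of_approx {S T : Set (Euc d)} {η : ℝ} (h : η ∈ deloneApprox S T) :
    0 < η ∧ η < 1 / Real.sqrt 2 ∧
      ∃ a b : Euc d, ‖a‖ < η ∧ ‖b‖ < η ∧ Mt S T a b (1 / η) := by
  obtain ⟨⟨h0, h2⟩, a, ha, b, hb, heq⟩ := h
  refine ⟨h0, h2, a, b, by simpa using ha, by simpa using hb, ?_⟩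
  intro z hz
  have := Set.ext_iff.mp heq z
  simp only [Set.mem_inter_iff, mem_ball_zero_iff, mem_tr] at this
  constructor
  · intro hs; exact (this.mp ⟨hs, hz⟩).1
  · intro ht; exact (this.mpr ⟨ht, hz⟩).1

lemma approx_of_mt {S T : Set (Euc d)} {η ρ : ℝ} {a b : Euc d}
    (h0 : 0 < η) (h2 : η < 1 / Real.sqrt 2) (ha : ‖a‖ < η) (hb : ‖b‖ < η)
    (h : Mt S T a b ρ) (hρ : 1 / η ≤ ρ) : η ∈ deloneApprox S T := by
  refine ⟨⟨h0, h2⟩, a, by simpa using ha, b, by simpa using hb, ?_⟩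
  ext z
  simp only [Set.mem_inter_iff, mem_ball_zero_iff, mem_tr]
  constructor
  · rintro ⟨hs, hz⟩; exact ⟨(h z (lt_of_lt_of_le hz hρ)).mp hs, hz⟩
  · rintro ⟨ht, hz⟩; exact ⟨(h z (lt_of_lt_of_le hz hρ)).mpr ht, hz⟩

lemma deloneApprox_symm {S T : Set (Euc d)} : deloneApprox S T = deloneApprox T S := by
  ext η
  constructor <;> rintro ⟨hη, v, hv, v', hv', heq⟩ <;> exact ⟨hη, v', hv', v, hv, heq.symm⟩

lemma deloneDist_symm {S T : Set (Euc d)} : deloneDist S T = deloneDist T S := by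
  rw [deloneDist, deloneDist, deloneApprox_symm]

lemma deloneDist_le {S T : Set (Euc d)} {η : ℝ} (h : η ∈ deloneApprox S T) :
    deloneDist S T ≤ η := by
  rw [deloneDist, if_pos ⟨η, h⟩]
  exact csInf_le ⟨0, fun x hx => le_of_lt hx.1.1⟩ h

lemma exists_approx_of_dist_lt {S T : Set (Euc d)} {η : ℝ}
    (h : deloneDist S T < η) (hη : η ≤ 1 / Real.sqrt 2) :
    ∃ η' ∈ deloneApprox S T, η' < η := by
  rw [deloneDist] at h
  split_ifs at h with hne
  · exact exists_lt_of_csInf_lt hne h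
  · exact absurd (lt_of_lt_of_le h hη) (lt_irrefl _)

lemma approx_comp {S T U : Set (Euc d)} {η₁ η₂ η : ℝ}
    (h1 : η₁ ∈ deloneApprox S T) (h2 : η₂ ∈ deloneApprox T U)
    (hη1 : η₁ < η) (hη2 : η₂ < η) (hη : η ≤ 1 / 10) :
    4 * η ∈ deloneApprox S U := by
  obtain ⟨hp1, -, a₁, b₁, ha₁, hb₁, hm1⟩ := mt_of_approx h1
  obtain ⟨hp2, -, a₂, b₂, ha₂, hb₂, hm2⟩ := mt_of_approx h2
  have hηpos : 0 < η := lt_trans hp1 hη1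
  have hm2' : Mt T U b₁ (b₂ + (b₁ - a₂)) (1 / η₂ - ‖b₁ - a₂‖) :=
    (hm2.shift (b₁ - a₂)).congr (by module) rfl
  have hw : ‖b₁ - a₂‖ ≤ η₁ + η₂ := by
    calc ‖b₁ - a₂‖ ≤ ‖b₁‖ + ‖a₂‖ := norm_sub_le _ _
    _ ≤ η₁ + η₂ := by linarith
  have hr1 : 1 / (4 * η) ≤ 1 / η₁ :=
    one_div_le_one_div_of_le hp1 (by linarith)
  have hr2 : 1 / (4 * η) ≤ 1 / η₂ - ‖b₁ - a₂‖ := by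
    have h1η : 1 / η ≤ 1 / η₂ := one_div_le_one_div_of_le hp2 (le_of_lt hη2)
    have hkey : 1 / (4 * η) + 2 * η ≤ 1 / η := by
      rw [div_add' _ _ _ (by positivity), div_le_div_iff₀ (by positivity) hηpos]
      nlinarith [mul_nonneg (sub_nonneg.mpr hη) hηpos.le, mul_pos hηpos hηpos]
    linarith
  have hm : Mt S U a₁ (b₂ + (b₁ - a₂)) (1 / (4 * η)) :=
    (hm1.mono hr1).trans (hm2'.mono hr2)
  refine approx_of_mt (by positivity) ?_ ?_ ?_ hm (le_refl _)
  · calc (4 : ℝ) * η ≤ 4 * (1/10) := by linarith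
    _ < 1 / 2 := by norm_num
    _ < 1 / Real.sqrt 2 := half_lt_inv_sqrt_two
  · linarith
  · calc ‖b₂ + (b₁ - a₂)‖ ≤ ‖b₂‖ + ‖b₁ - a₂‖ := norm_add_le _ _
    _ < η₂ + (η₁ + η₂) := by linarith
    _ < 4 * η := by linarith


lemma le_one_div_of_le {β c : ℝ} (hβ : 0 < β) (h : β ≤ 1 / c) : c ≤ 1 / β := by
  rcases le_or_gt c 0 with hc | hc
  · exact hc.trans (by positivity)
  · have := one_div_le_one_div_of_le hβ h
    rwa [one_div_one_div] at this

lemma mt_zero_of_eq {X X' : Set (Euc d)} {ρ : ℝ}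
    (h : X ∩ ball (0 : Euc d) ρ = X' ∩ ball (0 : Euc d) ρ) : Mt X X' 0 0 ρ := by
  intro z hz
  have := Set.ext_iff.mp h z
  simp only [Set.mem_inter_iff, mem_ball_zero_iff] at this
  rw [add_zero]
  exact ⟨fun hs => (this.mp ⟨hs, hz⟩).1, fun ht => (this.mpr ⟨ht, hz⟩).1⟩

lemma eq_of_mt {S T : Set (Euc d)} {v : Euc d} {ρ : ℝ} (h : Mt S T v 0 ρ) :
    tr S v ∩ ball (0 : Euc d) ρ = T ∩ ball (0 : Euc d) ρ := by
  ext z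
  simp only [Set.mem_inter_iff, mem_ball_zero_iff, mem_tr]
  constructor
  · rintro ⟨hs, hz⟩; exact ⟨by simpa using (h z hz).mp hs, hz⟩
  · rintro ⟨ht, hz⟩; exact ⟨(h z hz).mpr (by simpa using ht), hz⟩

lemma tr_mem_hullD {S Y : Set (Euc d)} (hY : Y ∈ hullD S) (w : Euc d) :
    tr Y w ∈ hullD S := by
  intro ε hε
  set ε' : ℝ := min (ε / 2) (1 / 2) with hε'def
  have hε'pos : 0 < ε' := by positivity
  set β : ℝ := min (ε' / 2) (1 / (1 / ε' + ‖w‖)) with hβdef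
  have hβpos : 0 < β := by positivity
  obtain ⟨v, hv⟩ := hY β hβpos
  have hβle : β ≤ 1 / Real.sqrt 2 := by
    have : β ≤ ε' / 2 := min_le_left _ _
    have : β ≤ 1 / 4 := by
      have : ε' ≤ 1 / 2 := min_le_right _ _
      linarith
    linarith [half_lt_inv_sqrt_two]
  obtain ⟨η₀, hη₀mem, hη₀lt⟩ := exists_approx_of_dist_lt hv hβle
  obtain ⟨hη₀pos, -, a, b, ha, hb, hm⟩ := mt_of_approx hη₀mem
  have hm2 : Mt (tr S v) Y (a + w) (b + w) (1 / η₀ - ‖w‖) := hm.shift w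
  have hm3 : Mt (tr S (v + w)) (tr Y w) a b (1 / η₀ - ‖w‖) := by
    intro z hz
    have := hm2 z hz
    simp only [mem_tr] at this ⊢
    rwa [show z + (a + w) + v = z + a + (v + w) by module,
      show z + (b + w) = z + b + w by module] at this
  have hηβ : η₀ < ε' / 2 := lt_of_lt_of_le hη₀lt (min_le_left _ _)
  have hρ : 1 / ε' ≤ 1 / η₀ - ‖w‖ := by
    have h1 : 1 / η₀ ≥ 1 / β := one_div_le_one_div_of_le hη₀pos (le_of_lt hη₀lt)
    have h2 : 1 / β ≥ 1 / ε' + ‖w‖ := le_one_div_of_le hβpos (min_le_right _ _)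
    linarith
  have hmem : ε' ∈ deloneApprox (tr S (v + w)) (tr Y w) := by
    refine approx_of_mt hε'pos ?_ ?_ ?_ hm3 hρ
    · calc ε' ≤ 1 / 2 := min_le_right _ _
      _ < 1 / Real.sqrt 2 := half_lt_inv_sqrt_two
    · linarith
    · linarith
  exact ⟨v + w, lt_of_le_of_lt (deloneDist_le hmem) (by
    calc ε' ≤ ε / 2 := min_le_left _ _
    _ < ε := by linarith)⟩

lemma hull_unifDisc {X : Set (Euc d)} {r R : ℝ} (hX : IsDeloneWith r R X) :
    ∀ Z ∈ hullD X, ∀ y : Euc d, (Z ∩ ball y (r / 2)).Subsingleton := by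
  obtain ⟨hr, hR, hdisc, -⟩ := hX
  intro Z hZ y p hp q hq
  simp only [Set.mem_inter_iff, mem_ball] at hp hq
  set M : ℝ := ‖y‖ + r + 1 with hMdef
  have hM1 : 1 ≤ M := by have := norm_nonneg y; linarith
  set ε₀ : ℝ := min (r / 4) (1 / (M + 1)) with hε₀def
  have hε₀pos : 0 < ε₀ := by positivity
  obtain ⟨v, hv⟩ := hZ ε₀ hε₀pos
  have hε₀le : ε₀ ≤ 1 / Real.sqrt 2 := by
    have h1 : ε₀ ≤ 1 / (M + 1) := min_le_right _ _
    have h2 : (1 : ℝ) / (M + 1) ≤ 1 / 2 := by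
      apply one_div_le_one_div_of_le <;> linarith
    linarith [half_lt_inv_sqrt_two]
  obtain ⟨η, hηmem, hηlt⟩ := exists_approx_of_dist_lt hv hε₀le
  obtain ⟨hηpos, -, a, b, ha, hb, hm⟩ := mt_of_approx hηmem
  have hη1 : η < 1 := by
    have h1 : ε₀ ≤ 1 / (M + 1) := min_le_right _ _
    have h2 : (1 : ℝ) / (M + 1) ≤ 1 / 2 := by
      apply one_div_le_one_div_of_le <;> linarith
    linarith
  have hrad : M + 1 < 1 / η := by
    have h1 : 1 / η > 1 / ε₀ := one_div_lt_one_div_of_lt hηpos hηlt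
    have h2 : 1 / ε₀ ≥ M + 1 := le_one_div_of_le hε₀pos (min_le_right _ _)
    linarith
  -- transfer the two points into X
  have key : ∀ s : Euc d, s ∈ Z → dist s y < r / 2 → s - b + a + v ∈ X := by
    intro s hs hsy
    have hznorm : ‖s - b‖ < 1 / η := by
      calc ‖s - b‖ ≤ ‖s‖ + ‖b‖ := norm_sub_le _ _
        _ ≤ ‖s - y‖ + ‖y‖ + ‖b‖ := by linarith [norm_sub_norm_le s y, norm_le_norm_add_norm_sub' s y, norm_add_le (s - y) y, norm_sub_le s y]
        _ < M + 1 := by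
            have : ‖s - y‖ < r / 2 := by rwa [← dist_eq_norm]
            linarith
        _ < 1 / η := hrad
    have := (hm.symm (s - b) hznorm).mp (by simpa using hs)
    rw [mem_tr] at this
    rwa [show s - b + a + v = s - b + a + v from rfl]
  have hpX : p - b + a + v ∈ X := key p hp.1 hp.2
  have hqX : q - b + a + v ∈ X := key q hq.1 hq.2
  have : p - b + a + v = q - b + a + v := by
    apply hdisc (p - b + a + v) ⟨hpX, mem_ball_self hr⟩
    refine ⟨hqX, ?_⟩
    rw [mem_ball, dist_eq_norm]
    have : ‖q - p‖ < r := by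
      calc ‖q - p‖ = dist q p := (dist_eq_norm q p).symm
        _ ≤ dist q y + dist y p := dist_triangle q y p
        _ < r / 2 + r / 2 := by rw [dist_comm y p]; exact add_lt_add hq.2 hp.2
        _ = r := by ring
    calc ‖q - b + a + v - (p - b + a + v)‖ = ‖q - p‖ := by
          congr 1; module
      _ < r := this
  have h0 : p - q = (p - b + a + v) - (q - b + a + v) := by module
  rw [this, sub_self] at h0
  exact sub_eq_zero.mp h0

lemma hull_relDense {X : Set (Euc d)} {r R : ℝ} (hX : IsDeloneWith r R X) :
    ∀ Z ∈ hullD X, ∀ y : Euc d, (Z ∩ closedBall y (R + 1)).Nonempty := by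
  obtain ⟨hr, hR, -, hdense⟩ := hX
  intro Z hZ y
  set M : ℝ := ‖y‖ + R + 1 with hMdef
  have hM1 : 1 ≤ M := by have := norm_nonneg y; linarith
  set ε₀ : ℝ := min (1 / 2) (1 / (M + 1)) with hε₀def
  have hε₀pos : 0 < ε₀ := by positivity
  obtain ⟨v, hv⟩ := hZ ε₀ hε₀pos
  have hε₀le : ε₀ ≤ 1 / Real.sqrt 2 := by
    have h1 : ε₀ ≤ 1 / 2 := min_le_left _ _
    linarith [half_lt_inv_sqrt_two]
  obtain ⟨η, hηmem, hηlt⟩ := exists_approx_of_dist_lt hv hε₀le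
  obtain ⟨hηpos, -, a, b, ha, hb, hm⟩ := mt_of_approx hηmem
  have hη1 : η < 1 := by
    have h1 : ε₀ ≤ 1 / 2 := min_le_left _ _
    linarith
  have hrad : M < 1 / η := by
    have h1 : 1 / η > 1 / ε₀ := one_div_lt_one_div_of_lt hηpos hηlt
    have h2 : 1 / ε₀ ≥ M + 1 := le_one_div_of_le hε₀pos (min_le_right _ _)
    linarith
  obtain ⟨q, hqX, hq⟩ := hdense (y + a + v)
  set z : Euc d := q - a - v with hzdef
  have hz : ‖z‖ < 1 / η := by
    have : ‖z - y‖ ≤ R := by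
      rw [show z - y = q - (y + a + v) by module, ← dist_eq_norm]
      rwa [mem_closedBall] at hq
    calc ‖z‖ ≤ ‖z - y‖ + ‖y‖ := by
          have := norm_add_le (z - y) y; simpa using this
      _ ≤ R + ‖y‖ := by linarith
      _ < M := by simp [hMdef]; linarith
      _ < 1 / η := hrad
  have hzin : z + a ∈ tr X v := by
    rw [mem_tr, show z + a + v = q by module]; exact hqX
  have hzZ : z + b ∈ Z := (hm z hz).mp hzin
  refine ⟨z + b, hzZ, ?_⟩
  rw [mem_closedBall, dist_eq_norm]
  calc ‖z + b - y‖ ≤ ‖z - y‖ + ‖b‖ := by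
        rw [show z + b - y = (z - y) + b by module]; exact norm_add_le _ _
    _ ≤ R + 1 := by
        have h1 : ‖z - y‖ ≤ R := by
          rw [show z - y = q - (y + a + v) by module, ← dist_eq_norm]
          rwa [mem_closedBall] at hq
        have : η ≤ 1 := le_of_lt hη1
        linarith


lemma seq_compact_hull {X₁ : Set (Euc d)} (hX₁ : IsDelone X₁) (hft : FiniteType X₁)
    (u : ℕ → Set (Euc d)) (hu : ∀ n, u n ∈ hullD X₁) :
    ∃ Y ∈ hullD X₁, ∃ φ : ℕ → ℕ, StrictMono φ ∧
      ∀ ε > (0 : ℝ), ∃ N : ℕ, ∀ n ≥ N, deloneDist (u (φ n)) Y < ε := by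
  classical
  obtain ⟨r₁, R₁, hr₁, hR₁, hdisc₁, hdense₁⟩ := hX₁
  choose v hv using fun n => hu n (1 / (n + 1)) (by positivity)
  choose x hx using fun n => hdense₁ (v n)
  set t : ℕ → Euc d := fun n => v n - x n with htdef
  have ht : ∀ n, t n ∈ closedBall (0 : Euc d) R₁ := by
    intro n
    rw [mem_closedBall_zero_iff, show t n = v n - x n from rfl, ← dist_eq_norm, dist_comm]
    exact (hx n).2
  obtain ⟨t0, -, φ₁, hφ₁, hconv₁⟩ := (isCompact_closedBall (0 : Euc d) R₁).tendsto_subseq ht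
  set D : Set (Euc d) := X₁ - X₁ with hDdef
  have hDc : D.Countable := by
    have hsub : D ⊆ ⋃ k : ℕ, (D ∩ ball (0 : Euc d) (k + 1)) := by
      intro z hz
      obtain ⟨k, hk⟩ := exists_nat_gt ‖z‖
      exact Set.mem_iUnion.mpr ⟨k, hz, mem_ball_zero_iff.mpr (by push_cast; linarith)⟩
    exact (Set.countable_iUnion fun k => (hft _ isBounded_ball).countable).mono hsub
  haveI := hDc.to_subtype
  set f : ℕ → (↥D → Bool) := fun n z => decide ((z : Euc d) + x n ∈ X₁) with hfdef
  obtain ⟨g, -, φ₂, hφ₂, hg⟩ :=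
    (isCompact_univ : IsCompact (Set.univ : Set (↥D → Bool))).tendsto_subseq
      (x := fun n => f (φ₁ n)) (fun n => Set.mem_univ _)
  set φ : ℕ → ℕ := φ₁ ∘ φ₂ with hφdef
  have hφ : StrictMono φ := hφ₁.comp hφ₂
  have hptw : ∀ z : ↥D, ∀ᶠ n in Filter.atTop, f (φ n) z = g z := by
    intro z
    have h1 : Filter.Tendsto (fun n => f (φ n) z) Filter.atTop (nhds (g z)) :=
      tendsto_pi_nhds.mp hg z
    have h2 : {g z} ∈ nhds (g z) := (isOpen_discrete ({g z} : Set Bool)).mem_nhds rfl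
    filter_upwards [h1 h2] with n hn
    simpa using hn
  have hpat : ∀ k : ℕ, ∀ᶠ n in Filter.atTop,
      ∀ z : Euc d, ∀ hz : z ∈ D, ‖z‖ < k → f (φ n) ⟨z, hz⟩ = g ⟨z, hz⟩ := by
    intro k
    have hsfin : {z : ↥D | ‖(z : Euc d)‖ < k}.Finite := by
      have hsub : {z : ↥D | ‖(z : Euc d)‖ < k} ⊆ Subtype.val ⁻¹' (D ∩ ball 0 k) :=
        fun z hz => ⟨z.2, mem_ball_zero_iff.mpr hz⟩
      exact (((hft _ isBounded_ball).preimage Subtype.val_injective.injOn).subset hsub)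
    have := (Filter.eventually_all_finite hsfin).mpr
      (fun z _ => hptw z)
    filter_upwards [this] with n hn z hz hzk
    exact hn ⟨z, hz⟩ hzk
  have hZD : ∀ n (z : Euc d), z + x n ∈ X₁ → z ∈ D := by
    intro n z hz
    exact Set.mem_sub.mpr ⟨z + x n, hz, x n, (hx n).1, by module⟩
  set W : Set (Euc d) := {w | ∃ h : w ∈ D, g ⟨w, h⟩ = true} with hWdef
  set Y : Set (Euc d) := tr W t0 with hYdef
  have htconv : Filter.Tendsto (fun n => t (φ n)) Filter.atTop (nhds t0) :=
    hconv₁.comp hφ₂.tendsto_atTop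
  have hCγ : ∀ γ : ℝ, 0 < γ → γ < 1 / 2 → ∀ᶠ n in Filter.atTop,
      γ ∈ deloneApprox (tr X₁ (v (φ n))) Y := by
    intro γ hγ hγ2
    obtain ⟨k, hk⟩ := exists_nat_gt (1 / γ + R₁ + 1)
    have hE2 : ∀ᶠ n in Filter.atTop, dist (t (φ n)) t0 < γ :=
      (Metric.tendsto_nhds.mp htconv) γ hγ
    filter_upwards [hpat k, hE2] with n hpatn htn
    have hMt : Mt (tr X₁ (v (φ n))) Y 0 (t (φ n) - t0) (1 / γ) := by
      intro z hz
      have hζ : ‖z + t (φ n)‖ < (k : ℝ) := by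
        have h1 : ‖t (φ n)‖ ≤ R₁ := mem_closedBall_zero_iff.mp (ht (φ n))
        calc ‖z + t (φ n)‖ ≤ ‖z‖ + ‖t (φ n)‖ := norm_add_le _ _
          _ < 1 / γ + R₁ := by linarith
          _ < k := by linarith
      have hL : z + 0 ∈ tr X₁ (v (φ n)) ↔ (z + t (φ n)) + x (φ n) ∈ X₁ := by
        rw [add_zero, mem_tr, show z + v (φ n) = z + t (φ n) + x (φ n) by
          rw [show t (φ n) = v (φ n) - x (φ n) from rfl]; module]
      have hR : z + (t (φ n) - t0) ∈ Y ↔ (z + t (φ n)) ∈ W := by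
        rw [hYdef, mem_tr, show z + (t (φ n) - t0) + t0 = z + t (φ n) by module]
      rw [hL, hR]
      constructor
      · intro hζX
        have hζD : z + t (φ n) ∈ D := hZD (φ n) _ hζX
        have := hpatn _ hζD hζ
        rw [hfdef] at this
        simp only [decide_eq_true_eq] at this
        exact ⟨hζD, by rw [← this]; simp [hζX]⟩
      · rintro ⟨hζD, hgtrue⟩
        have := hpatn _ hζD hζ
        rw [hfdef] at this
        rw [hgtrue] at this
        simpa using this
    refine approx_of_mt hγ ?_ (by simpa using hγ) ?_ hMt (le_refl _)
    · linarith [half_lt_inv_sqrt_two]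
    · rwa [← dist_eq_norm]
  have hYmem : Y ∈ hullD X₁ := by
    intro ε hε
    set γ : ℝ := min (ε / 2) (1 / 4) with hγdef
    have hγpos : 0 < γ := by positivity
    have hγlt : γ < 1 / 2 := lt_of_le_of_lt (min_le_right _ _) (by norm_num)
    obtain ⟨n, hn⟩ := (hCγ γ hγpos hγlt).exists
    refine ⟨v (φ n), lt_of_le_of_lt (deloneDist_le hn) ?_⟩
    calc γ ≤ ε / 2 := min_le_left _ _
      _ < ε := by linarith
  refine ⟨Y, hYmem, φ, hφ, ?_⟩
  intro ε hε
  set μ : ℝ := min (ε / 8) (1 / 20) with hμdef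
  have hμpos : 0 < μ := by positivity
  have hμ20 : μ ≤ 1 / 20 := min_le_right _ _
  have hEa : ∀ᶠ n in Filter.atTop,
      ∃ ηa ∈ deloneApprox (u (φ n)) (tr X₁ (v (φ n))), ηa < μ := by
    obtain ⟨N, hN⟩ := exists_nat_gt (1 / μ)
    rw [Filter.eventually_atTop]
    refine ⟨N, fun n hn => ?_⟩
    have h1 : (1 : ℝ) / (φ n + 1) < μ := by
      have h2 : (N : ℝ) ≤ φ n := by
        have h0 : n ≤ φ n := hφ.le_apply
        have : (n : ℝ) ≤ φ n := by exact_mod_cast h0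
        have hNn : (N : ℝ) ≤ n := by exact_mod_cast hn
        linarith
      have h3 : 1 / μ < (φ n : ℝ) + 1 := by linarith
      rw [div_lt_iff₀ (by positivity)]
      rw [div_lt_iff₀ hμpos] at h3
      nlinarith
    have hdistlt : deloneDist (tr X₁ (v (φ n))) (u (φ n)) < μ :=
      lt_trans (hv (φ n)) h1
    obtain ⟨η', hη'mem, hη'lt⟩ := exists_approx_of_dist_lt hdistlt
      (by linarith [half_lt_inv_sqrt_two])
    rw [deloneApprox_symm] at hη'mem
    exact ⟨η', hη'mem, hη'lt⟩
  have hEb := hCγ (μ / 2) (by positivity) (by linarith)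
  have hfinal : ∀ᶠ n in Filter.atTop, deloneDist (u (φ n)) Y < ε := by
    filter_upwards [hEa, hEb] with n ⟨ηa, hηa, hηalt⟩ hb
    have hcomp : 4 * μ ∈ deloneApprox (u (φ n)) Y :=
      approx_comp hηa hb hηalt (by linarith) (by linarith)
    calc deloneDist (u (φ n)) Y ≤ 4 * μ := deloneDist_le hcomp
      _ ≤ 4 * (ε / 8) := by
          have := min_le_left (ε / 8) (1 / 20); linarith [hμdef ▸ this]
      _ < ε := by linarith
  obtain ⟨N, hN⟩ := Filter.eventually_atTop.mp hfinal
  exact ⟨N, hN⟩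


lemma unif_cont {X₁ : Set (Euc d)} (hX₁ : IsDelone X₁) (hft : FiniteType X₁)
    (π : Set (Euc d) → Set (Euc d))
    (hcont : ∀ Y ∈ hullD X₁, ∀ ε > (0 : ℝ), ∃ δ > (0 : ℝ), ∀ Z ∈ hullD X₁,
      deloneDist Y Z < δ → deloneDist (π Y) (π Z) < ε) :
    ∀ e > (0 : ℝ), ∃ δ > (0 : ℝ), ∀ X ∈ hullD X₁, ∀ X' ∈ hullD X₁,
      deloneDist X X' < δ → deloneDist (π X) (π X') < e := by
  intro e he
  by_contra hcon
  push_neg at hcon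
  have hseq : ∀ n : ℕ, ∃ X ∈ hullD X₁, ∃ X' ∈ hullD X₁,
      deloneDist X X' < 1 / (n + 1) ∧ e ≤ deloneDist (π X) (π X') := by
    intro n
    obtain ⟨X, hX, X', hX', h1, h2⟩ := hcon (1 / (n + 1)) (by positivity)
    exact ⟨X, hX, X', hX', h1, h2⟩
  choose A hA B hB hd1 hd2 using hseq
  obtain ⟨Y, hY, φ, hφ, hconv⟩ := seq_compact_hull hX₁ hft A hA
  set e' : ℝ := min (e / 8) (1 / 20) with he'def
  have he'pos : 0 < e' := by positivity
  have he'20 : e' ≤ 1 / 20 := min_le_right _ _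
  obtain ⟨δY, hδYpos, hδYp⟩ := hcont Y hY e' he'pos
  set μ : ℝ := min (δY / 8) (1 / 20) with hμdef
  have hμpos : 0 < μ := by positivity
  have hμ20 : μ ≤ 1 / 20 := min_le_right _ _
  obtain ⟨N1, hN1⟩ := hconv μ hμpos
  obtain ⟨N2, hN2⟩ := exists_nat_gt (1 / μ)
  set n₀ : ℕ := max N1 N2 with hn₀def
  have h1 : deloneDist (A (φ n₀)) Y < μ := hN1 n₀ (le_max_left _ _)
  have h2 : deloneDist (A (φ n₀)) (B (φ n₀)) < μ := by
    refine lt_trans (hd1 (φ n₀)) ?_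
    have hn2 : (N2 : ℝ) ≤ φ n₀ := by
      have h0 : n₀ ≤ φ n₀ := hφ.le_apply
      have : N2 ≤ φ n₀ := le_trans (le_max_right N1 N2) h0
      exact_mod_cast this
    rw [div_lt_iff₀ (by positivity)]
    rw [div_lt_iff₀ hμpos] at hN2
    nlinarith
  have hsqrt : (1 : ℝ) / 20 ≤ 1 / Real.sqrt 2 := by linarith [half_lt_inv_sqrt_two]
  obtain ⟨ηa, hηa, hηalt⟩ := exists_approx_of_dist_lt h1 (by linarith)
  obtain ⟨ηb, hηb, hηblt⟩ := exists_approx_of_dist_lt h2 (by linarith)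
  rw [deloneApprox_symm] at hηa
  have hYB : deloneDist Y (B (φ n₀)) < δY := by
    have hcompab : 4 * μ ∈ deloneApprox Y (B (φ n₀)) :=
      approx_comp hηa hηb hηalt hηblt (by linarith)
    have hμδ : μ ≤ δY / 8 := min_le_left _ _
    calc deloneDist Y (B (φ n₀)) ≤ 4 * μ := deloneDist_le hcompab
      _ < δY := by linarith
  have hYA : deloneDist Y (A (φ n₀)) < δY := by
    rw [deloneDist_symm]
    have hμδ : μ ≤ δY / 8 := min_le_left _ _
    linarith
  have hpa : deloneDist (π Y) (π (A (φ n₀))) < e' := hδYp _ (hA (φ n₀)) hYA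
  have hpb : deloneDist (π Y) (π (B (φ n₀))) < e' := hδYp _ (hB (φ n₀)) hYB
  obtain ⟨ηc, hηc, hηclt⟩ := exists_approx_of_dist_lt hpa (by linarith)
  obtain ⟨ηd, hηd, hηdlt⟩ := exists_approx_of_dist_lt hpb (by linarith)
  rw [deloneApprox_symm] at hηc
  have hfin : 4 * e' ∈ deloneApprox (π (A (φ n₀))) (π (B (φ n₀))) :=
    approx_comp hηc hηd hηclt hηdlt (by linarith)
  have : deloneDist (π (A (φ n₀))) (π (B (φ n₀))) ≤ 4 * e' := deloneDist_le hfin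
  have he8 : e' ≤ e / 8 := min_le_left _ _
  linarith [hd2 (φ n₀)]


end Aux

set_option maxHeartbeats 1000000 in
/-- Lemma: semi-sliding-block-code property of factor maps.
If `X₁` is of finite type and `π : Ω_{X₁} → Ω_{X₂}` is a factor map, then there is `s₀ > 0`
such that for every `ε > 0` there is `R_ε > 0` such that for every `R ≥ R_ε`:
whenever `X, X' ∈ Ω_{X₁}` agree on `B_{R+s₀}(0)`, there is `v ∈ B_ε(0)` with
`(π(X) - v) ∩ B_R(0) = π(X') ∩ B_R(0)`. -/
theorem semi_sliding_block_code {d : ℕ} (hd : 0 < d) (X₁ X₂ : Set (Euc d))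
    (hX₁ : IsDelone X₁) (hX₂ : IsDelone X₂) (hft : FiniteType X₁)
    (π : Set (Euc d) → Set (Euc d)) (hπ : IsFactorOn (hullD X₁) (hullD X₂) π) :
    ∃ s₀ > (0 : ℝ), ∀ ε > (0 : ℝ), ∃ Rε > (0 : ℝ), ∀ R ≥ Rε,
      ∀ X ∈ hullD X₁, ∀ X' ∈ hullD X₁,
        X ∩ ball (0 : Euc d) (R + s₀) = X' ∩ ball (0 : Euc d) (R + s₀) →
        ∃ v ∈ ball (0 : Euc d) ε,
          tr (π X) v ∩ ball (0 : Euc d) R = π X' ∩ ball (0 : Euc d) R := by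
  classical
  obtain ⟨r, R, hX₂w⟩ := hX₂
  have hdisc2 := hull_unifDisc hX₂w
  have hdense2 := hull_relDense hX₂w
  obtain ⟨hrpos, hRpos, -, -⟩ := hX₂w
  set r2 : ℝ := r / 2 with hr2def
  clear_value r2
  set R2 : ℝ := R + 1 with hR2def
  clear_value R2
  have hr2pos : 0 < r2 := by rw [hr2def]; positivity
  have hR2one : 1 ≤ R2 := by rw [hR2def]; linarith
  have hUC := unif_cont hX₁ hft π hπ.2.2.1
  set ε₀ : ℝ := min (r2 / 4) (1 / (R2 + 3)) with hε₀def
  clear_value ε₀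
  have hε₀pos : 0 < ε₀ := by rw [hε₀def]; positivity
  have hε₀r : ε₀ ≤ r2 / 4 := by rw [hε₀def]; exact min_le_left _ _
  have hε₀R : ε₀ ≤ 1 / (R2 + 3) := by rw [hε₀def]; exact min_le_right _ _
  have hε₀quarter : ε₀ ≤ 1 / 4 := by
    have h1 : (1 : ℝ) / (R2 + 3) ≤ 1 / 4 := by
      apply one_div_le_one_div_of_le <;> linarith
    linarith
  set c : ℝ := 1 / ε₀ - ε₀ with hcdef
  clear_value c
  have hcR2 : R2 + 2 ≤ c := by
    have h1 : R2 + 3 ≤ 1 / ε₀ := le_one_div_of_le hε₀pos hε₀R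
    rw [hcdef]; linarith
  have hcpos : 0 < c := by linarith
  obtain ⟨δ₀, hδ₀pos, hδ₀⟩ := hUC ε₀ hε₀pos
  set s₀ : ℝ := 1 / δ₀ + 2 with hs₀def
  clear_value s₀
  have hs₀pos : 0 < s₀ := by rw [hs₀def]; positivity
  have hs₀two : 2 ≤ s₀ := by
    rw [hs₀def]; have : 0 < 1 / δ₀ := by positivity
    linarith
  refine ⟨s₀, hs₀pos, ?_⟩
  intro ε hε
  set ε₁ : ℝ := min (ε / 4) ε₀ with hε₁def
  clear_value ε₁
  have hε₁pos : 0 < ε₁ := by rw [hε₁def]; positivity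
  have hε₁ε : ε₁ ≤ ε / 4 := by rw [hε₁def]; exact min_le_left _ _
  have hε₁ε₀ : ε₁ ≤ ε₀ := by rw [hε₁def]; exact min_le_right _ _
  obtain ⟨δ₁, hδ₁pos, hδ₁⟩ := hUC ε₁ hε₁pos
  set Rε : ℝ := 1 / δ₁ + 2 with hRεdef
  clear_value Rε
  have hRεpos : 0 < Rε := by rw [hRεdef]; positivity
  have hRεtwo : 2 ≤ Rε := by
    rw [hRεdef]; have : 0 < 1 / δ₁ := by positivity
    linarith
  refine ⟨Rε, hRεpos, ?_⟩
  intro R0 hR0 X hX X' hX' hagree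
  have hR0two : (2 : ℝ) ≤ R0 := le_trans hRεtwo hR0
  have hMt0 : Mt X X' 0 0 (R0 + s₀) := mt_zero_of_eq hagree
  have hπX : π X ∈ hullD X₂ := hπ.1 X hX
  have hπX' : π X' ∈ hullD X₂ := hπ.1 X' hX'
  -- uniqueness of local shifts at nearby base points
  have hUniq : ∀ y y' vv vv' : Euc d, ‖y - y'‖ ≤ 1 →
      ‖vv‖ < 2 * ε₀ → ‖vv'‖ < 2 * ε₀ →
      Mt (π X) (π X') (y + vv) y c → Mt (π X) (π X') (y' + vv') y' c → vv = vv' := by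
    intro y y' vv vv' hyy' hvv hvv' hm1 hm2
    obtain ⟨p, hpX', hpdist⟩ := hdense2 _ hπX' y
    rw [mem_closedBall, dist_eq_norm] at hpdist
    have hp1 : p + vv ∈ π X := by
      have hz : ‖p - y‖ < c := lt_of_le_of_lt hpdist (by linarith)
      have := (hm1 (p - y) hz).mpr (by rw [show p - y + y = p by module]; exact hpX')
      rwa [show p - y + (y + vv) = p + vv by module] at this
    have hp2 : p + vv' ∈ π X := by
      have hz : ‖p - y'‖ < c := by
        calc ‖p - y'‖ = ‖(p - y) + (y - y')‖ := by congr 1; module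
          _ ≤ ‖p - y‖ + ‖y - y'‖ := norm_add_le _ _
          _ < c := by linarith
      have := (hm2 (p - y') hz).mpr (by rw [show p - y' + y' = p by module]; exact hpX')
      rwa [show p - y' + (y' + vv') = p + vv' by module] at this
    have hpeq : p + vv = p + vv' := by
      refine hdisc2 _ hπX (p + vv) ⟨hp1, mem_ball_self hr2pos⟩ ⟨hp2, ?_⟩
      rw [mem_ball, dist_eq_norm]
      calc ‖p + vv' - (p + vv)‖ = ‖vv' - vv‖ := by congr 1; module
        _ ≤ ‖vv'‖ + ‖vv‖ := norm_sub_le _ _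
        _ < r2 := by linarith
    exact add_left_cancel hpeq
  -- existence of a local shift at every base point of the ball
  have hGood : ∀ y : Euc d, ‖y‖ ≤ R0 →
      ∃ vv : Euc d, ‖vv‖ < 2 * ε₀ ∧ Mt (π X) (π X') (y + vv) y c := by
    intro y hy
    have hXy : tr X y ∈ hullD X₁ := tr_mem_hullD hX y
    have hX'y : tr X' y ∈ hullD X₁ := tr_mem_hullD hX' y
    have hsh : Mt X X' y y (R0 + s₀ - ‖y‖) := (hMt0.shift y).congr (zero_add y) (zero_add y)
    have hmtY : Mt (tr X y) (tr X' y) 0 0 s₀ := by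
      intro z hz
      simp only [add_zero, mem_tr]
      exact hsh z (lt_of_lt_of_le hz (by linarith))
    have hdistY : deloneDist (tr X y) (tr X' y) < δ₀ := by
      have hs₀inv : (0 : ℝ) < 1 / s₀ := by positivity
      have hmem : 1 / s₀ ∈ deloneApprox (tr X y) (tr X' y) := by
        refine approx_of_mt hs₀inv ?_ (by simpa using hs₀inv) (by simpa using hs₀inv)
          hmtY (by rw [one_div_one_div])
        have : (1 : ℝ) / s₀ ≤ 1 / 2 := by
          apply one_div_le_one_div_of_le <;> linarith
        linarith [half_lt_inv_sqrt_two]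
      have hlt : 1 / s₀ < δ₀ := by
        rw [div_lt_iff₀ (by linarith)]
        have h1 : δ₀ * (1 / δ₀) = 1 := mul_one_div_cancel (ne_of_gt hδ₀pos)
        rw [hs₀def, mul_add, h1]
        linarith
      exact lt_of_le_of_lt (deloneDist_le hmem) hlt
    have himg : deloneDist (π (tr X y)) (π (tr X' y)) < ε₀ := hδ₀ _ hXy _ hX'y hdistY
    rw [hπ.2.2.2 X hX y, hπ.2.2.2 X' hX' y] at himg
    obtain ⟨η, hηmem, hηlt⟩ := exists_approx_of_dist_lt himg
      (by linarith [half_lt_inv_sqrt_two])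
    obtain ⟨hηpos, -, a, b, ha, hb, hm⟩ := mt_of_approx hηmem
    have hm2 : Mt (π X) (π X') (y + a) (y + b) (1 / η) := by
      intro z hz
      have := hm z hz
      simp only [mem_tr] at this
      rwa [show z + a + y = z + (y + a) by module,
        show z + b + y = z + (y + b) by module] at this
    have hm3 : Mt (π X) (π X') (y + (a - b)) y (1 / η - ‖-b‖) :=
      (hm2.shift (-b)).congr (by module) (by module)
    refine ⟨a - b, ?_, hm3.mono ?_⟩
    · calc ‖a - b‖ ≤ ‖a‖ + ‖b‖ := norm_sub_le _ _
        _ < 2 * ε₀ := by linarith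
    · have h1 : 1 / ε₀ < 1 / η := one_div_lt_one_div_of_lt hηpos hηlt
      rw [norm_neg, hcdef]
      linarith
  -- the local shift is globally constant on the ball of radius R0
  have hChain : ∀ y vv vv₀ : Euc d, ‖y‖ ≤ R0 →
      (‖vv‖ < 2 * ε₀ ∧ Mt (π X) (π X') (y + vv) y c) →
      (‖vv₀‖ < 2 * ε₀ ∧ Mt (π X) (π X') ((0 : Euc d) + vv₀) 0 c) → vv = vv₀ := by
    suffices H : ∀ n : ℕ, ∀ y vv vv₀ : Euc d, ‖y‖ ≤ R0 → ‖y‖ ≤ n →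
        (‖vv‖ < 2 * ε₀ ∧ Mt (π X) (π X') (y + vv) y c) →
        (‖vv₀‖ < 2 * ε₀ ∧ Mt (π X) (π X') ((0 : Euc d) + vv₀) 0 c) → vv = vv₀ by
      intro y vv vv₀ hy h1 h2
      obtain ⟨n, hn⟩ := exists_nat_ge ‖y‖
      exact H n y vv vv₀ hy hn h1 h2
    intro n
    induction n with
    | zero =>
      intro y vv vv₀ hy hy0 h1 h2
      have hy' : y = 0 := by
        rw [← norm_le_zero_iff]
        exact_mod_cast hy0
      subst hy'
      exact hUniq 0 0 vv vv₀ (by simp) h1.1 h2.1 h1.2 h2.2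
    | succ n ih =>
      intro y vv vv₀ hy hyn h1 h2
      by_cases hcase : ‖y‖ ≤ 1
      · exact hUniq y 0 vv vv₀ (by simpa using hcase) h1.1 h2.1 h1.2 h2.2
      · push_neg at hcase
        have hynz : ‖y‖ ≠ 0 := by positivity
        set y' : Euc d := (1 - 1 / ‖y‖) • y with hy'def
        have hy'norm : ‖y'‖ = ‖y‖ - 1 := by
          rw [hy'def, norm_smul, Real.norm_eq_abs, abs_of_nonneg (by
            rw [sub_nonneg, div_le_one (by linarith)]; linarith)]
          field_simp
        have hyy' : ‖y - y'‖ = 1 := by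
          rw [show y - y' = (1 / ‖y‖) • y by rw [hy'def]; module]
          rw [norm_smul, Real.norm_eq_abs, abs_of_nonneg (by positivity)]
          field_simp
        obtain ⟨vv', hvv'⟩ := hGood y' (by linarith)
        have e1 : vv = vv' := hUniq y y' vv vv' (le_of_eq hyy') h1.1 hvv'.1 h1.2 hvv'.2
        have e2 : vv' = vv₀ := by
          refine ih y' vv' vv₀ (by linarith) ?_ hvv' h2
          have : ‖y‖ ≤ (n : ℝ) + 1 := by exact_mod_cast hyn
          linarith [hy'norm]
        exact e1.trans e2
  obtain ⟨v₀, hv₀n, hv₀m⟩ := hGood 0 (by rw [norm_zero]; linarith)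
  have hv₀m' : Mt (π X) (π X') ((0 : Euc d) + v₀) 0 c := hv₀m
  -- smallness of v₀
  have hdistXX' : deloneDist X X' < δ₁ := by
    have hpos : (0 : ℝ) < 1 / (R0 + s₀) := by positivity
    have hmem : 1 / (R0 + s₀) ∈ deloneApprox X X' := by
      refine approx_of_mt hpos ?_ (by simpa using hpos) (by simpa using hpos) hMt0
        (by rw [one_div_one_div])
      have : (1 : ℝ) / (R0 + s₀) ≤ 1 / 2 := by
        apply one_div_le_one_div_of_le <;> linarith
      linarith [half_lt_inv_sqrt_two]
    have hlt : 1 / (R0 + s₀) < δ₁ := by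
      rw [div_lt_iff₀ (by linarith)]
      have h1 : δ₁ * (1 / δ₁) = 1 := mul_one_div_cancel (ne_of_gt hδ₁pos)
      have h2 : 1 / δ₁ + 2 ≤ R0 := by rw [← hRεdef]; exact hR0
      have h3 : (0 : ℝ) < R0 + s₀ - 1 / δ₁ := by linarith
      nlinarith [mul_pos hδ₁pos h3]
    exact lt_of_le_of_lt (deloneDist_le hmem) hlt
  have himg1 : deloneDist (π X) (π X') < ε₁ := hδ₁ X hX X' hX' hdistXX'
  obtain ⟨η, hηmem, hηlt⟩ := exists_approx_of_dist_lt himg1 (by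
    have : ε₁ ≤ 1 / 4 := le_trans hε₁ε₀ hε₀quarter
    linarith [half_lt_inv_sqrt_two])
  obtain ⟨hηpos, -, a, b, ha, hb, hm⟩ := mt_of_approx hηmem
  have hmw : Mt (π X) (π X') ((0 : Euc d) + (a - b)) 0 c := by
    have hm3 : Mt (π X) (π X') ((0 : Euc d) + (a - b)) 0 (1 / η - ‖-b‖) :=
      (hm.shift (-b)).congr (by module) (by module)
    refine hm3.mono ?_
    have h1 : 1 / ε₁ < 1 / η := one_div_lt_one_div_of_lt hηpos hηlt
    have h2 : 1 / ε₀ ≤ 1 / ε₁ := one_div_le_one_div_of_le hε₁pos hε₁ε₀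
    rw [norm_neg, hcdef]
    linarith
  have hweq : a - b = v₀ := by
    refine hUniq 0 0 (a - b) v₀ (by simp) ?_ hv₀n hmw hv₀m'
    calc ‖a - b‖ ≤ ‖a‖ + ‖b‖ := norm_sub_le _ _
      _ < 2 * ε₁ := by linarith
      _ ≤ 2 * ε₀ := by linarith
  have hv₀small : ‖v₀‖ < ε := by
    rw [← hweq]
    calc ‖a - b‖ ≤ ‖a‖ + ‖b‖ := norm_sub_le _ _
      _ < 2 * ε₁ := by linarith
      _ ≤ ε / 2 := by linarith
      _ < ε := by linarith
  refine ⟨v₀, mem_ball_zero_iff.mpr hv₀small, ?_⟩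
  apply eq_of_mt
  intro z hz
  obtain ⟨vz, hvzn, hvzm⟩ := hGood z (le_of_lt hz)
  have hvz : vz = v₀ := hChain z vz v₀ (le_of_lt hz) ⟨hvzn, hvzm⟩ ⟨hv₀n, hv₀m'⟩
  have := hvzm 0 (by rw [norm_zero]; exact hcpos)
  rw [hvz] at this
  rw [show (0 : Euc d) + (z + v₀) = z + v₀ by module, zero_add] at this
  rwa [add_zero]
end

section
/- Let Ω be a compact, translation-invariant set of Delone sets of ℝ^d on which the translation action of ℝ^d is minimal (every orbit is dense), and let φ₁ : Ω → Ω₁ and φ₂ : Ω → Ω₂ be two factor maps onto Delone systems. Suppose every element of Ω₂ is non-periodic and φ₁ is finite-to-one (all fibers of φ₁ are finite). If X, Y ∈ Ω and v ∈ ℝ^d satisfy φ₁(X) = φ₁(Y) and φ₂(X) = φ₂(Y − v), then v = 0. -/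
open Metric Set
open scoped Pointwise

namespace DeloneAux

variable {d : ℕ}

lemma mem_tr_iff {X : Set (Euc d)} {u x : Euc d} : x ∈ tr X u ↔ x + u ∈ X := by
  constructor
  · rintro ⟨a, ha, rfl⟩
    simpa using ha
  · intro h
    exact ⟨x + u, h, add_sub_cancel_right x u⟩

lemma tr_tr (X : Set (Euc d)) (u w : Euc d) : tr (tr X u) w = tr X (u + w) := by
  ext x
  simp only [mem_tr_iff]
  rw [show x + w + u = x + (u + w) by abel]

lemma tr_zero (X : Set (Euc d)) : tr X 0 = X := by
  ext x; simp [mem_tr_iff]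

lemma restrict_ball {S T : Set (Euc d)} {ρ σ : ℝ} (h : S ∩ ball 0 ρ = T ∩ ball 0 ρ)
    (hσ : σ ≤ ρ) : S ∩ ball 0 σ = T ∩ ball 0 σ := by
  have he := Set.ext_iff.mp h
  simp only [Set.mem_inter_iff, mem_ball_zero_iff] at he
  ext x
  simp only [Set.mem_inter_iff, mem_ball_zero_iff]
  constructor
  · rintro ⟨h1, h2⟩
    exact ⟨((he x).mp ⟨h1, lt_of_lt_of_le h2 hσ⟩).1, h2⟩
  · rintro ⟨h1, h2⟩
    exact ⟨((he x).mpr ⟨h1, lt_of_lt_of_le h2 hσ⟩).1, h2⟩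

lemma tr_ball_eq {S T : Set (Euc d)} {ρ : ℝ} (h : S ∩ ball 0 ρ = T ∩ ball 0 ρ)
    (u : Euc d) {σ : ℝ} (hσ : σ + ‖u‖ ≤ ρ) :
    tr S u ∩ ball 0 σ = tr T u ∩ ball 0 σ := by
  have he := Set.ext_iff.mp h
  simp only [Set.mem_inter_iff, mem_ball_zero_iff] at he
  have hn : ∀ x : Euc d, ‖x‖ < σ → ‖x + u‖ < ρ := by
    intro x hx
    calc ‖x + u‖ ≤ ‖x‖ + ‖u‖ := norm_add_le x u
      _ < σ + ‖u‖ := by linarith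
      _ ≤ ρ := hσ
  ext x
  simp only [Set.mem_inter_iff, mem_ball_zero_iff, mem_tr_iff]
  constructor
  · rintro ⟨h1, h2⟩
    exact ⟨((he (x + u)).mp ⟨h1, hn x h2⟩).1, h2⟩
  · rintro ⟨h1, h2⟩
    exact ⟨((he (x + u)).mpr ⟨h1, hn x h2⟩).1, h2⟩

lemma approx_symm {A B : Set (Euc d)} {ε : ℝ} (h : ε ∈ deloneApprox A B) :
    ε ∈ deloneApprox B A := by
  obtain ⟨h1, v, hv, v', hv', he⟩ := h
  exact ⟨h1, v', hv', v, hv, he.symm⟩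

lemma deloneDist_symm (A B : Set (Euc d)) : deloneDist A B = deloneDist B A := by
  have h : deloneApprox A B = deloneApprox B A :=
    Set.ext fun ε => ⟨fun h => approx_symm h, fun h => approx_symm h⟩
  rw [deloneDist, deloneDist, h]

lemma exists_approx_lt {A B : Set (Euc d)} {ε : ℝ} (h : deloneDist A B < ε)
    (hε : ε < 1 / Real.sqrt 2) : ∃ ε' ∈ deloneApprox A B, ε' < ε := by
  rw [deloneDist] at h
  split_ifs at h with hne
  · exact exists_lt_of_csInf_lt hne h
  · linarith

lemma deloneDist_le {A B : Set (Euc d)} {ε : ℝ} (h : ε ∈ deloneApprox A B) :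
    deloneDist A B ≤ ε := by
  rw [deloneDist, if_pos ⟨ε, h⟩]
  exact csInf_le ⟨0, fun x hx => le_of_lt hx.1.1⟩ h

lemma half_lt_inv_sqrt2 : (1 : ℝ) / 2 < 1 / Real.sqrt 2 := by
  have h0 : 0 < Real.sqrt 2 := Real.sqrt_pos.mpr (by norm_num)
  have h2 : Real.sqrt 2 < 2 := by
    nlinarith [Real.sq_sqrt (by norm_num : (2:ℝ) ≥ 0)]
  exact one_div_lt_one_div_of_lt h0 h2

lemma sep_subset {A B : Set (Euc d)} {s : ℝ} (hs : 0 < s)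
    (hB : ∀ y, (B ∩ ball y s).Subsingleton)
    (h : ∀ ε : ℝ, 0 < ε → ε ≤ 1/4 → ∃ u u' : Euc d, ‖u‖ < ε ∧ ‖u'‖ < ε ∧
      ∃ ρ : ℝ, 1/ε ≤ ρ ∧ tr A u ∩ ball 0 ρ = tr B u' ∩ ball 0 ρ) : A ⊆ B := by
  intro x hx
  have claim : ∀ δ : ℝ, 0 < δ → ∃ b ∈ B, ‖b - x‖ < δ := by
    intro δ hδ
    have hxpos : (0:ℝ) < ‖x‖ + 1 := by positivity
    set ε := min (δ/2) (min (1/4) (1/(‖x‖+1))) with hεdef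
    have hε0 : 0 < ε := lt_min (by linarith) (lt_min (by norm_num) (by positivity))
    have hε4 : ε ≤ 1/4 := (min_le_right _ _).trans (min_le_left _ _)
    have hεx : ε ≤ 1/(‖x‖+1) := (min_le_right _ _).trans (min_le_right _ _)
    have hεδ : ε ≤ δ/2 := min_le_left _ _
    obtain ⟨u, u', hu, hu', ρ, hρ, heq⟩ := h ε hε0 hε4
    have hρx : ‖x‖ + 1 ≤ ρ := by
      have := one_div_le_one_div_of_le hε0 hεx
      rw [one_div_one_div] at this
      linarith
    have hxball : x - u ∈ ball (0 : Euc d) ρ := by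
      rw [mem_ball_zero_iff]
      calc ‖x - u‖ ≤ ‖x‖ + ‖u‖ := norm_sub_le x u
        _ < ‖x‖ + 1 := by nlinarith
        _ ≤ ρ := hρx
    have hmem : x - u ∈ tr A u ∩ ball 0 ρ := by
      refine ⟨?_, hxball⟩
      rw [mem_tr_iff]
      simpa using hx
    rw [heq] at hmem
    obtain ⟨hmB, -⟩ := hmem
    rw [mem_tr_iff] at hmB
    refine ⟨x - u + u', hmB, ?_⟩
    have : x - u + u' - x = u' - u := by abel
    rw [this]
    calc ‖u' - u‖ ≤ ‖u'‖ + ‖u‖ := norm_sub_le u' u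
      _ < ε + ε := by linarith
      _ ≤ δ := by linarith
  obtain ⟨b, hbB, hbx⟩ := claim s hs
  have hkey : ∀ δ : ℝ, 0 < δ → δ ≤ s → ‖b - x‖ < δ := by
    intro δ hδ hδs
    obtain ⟨b', hb', hb'x⟩ := claim δ hδ
    have hbb : b = b' := by
      refine hB x ⟨hbB, ?_⟩ ⟨hb', ?_⟩
      · rw [mem_ball, dist_eq_norm]; exact hbx
      · rw [mem_ball, dist_eq_norm]; exact lt_of_lt_of_le hb'x hδs
    rw [hbb]; exact hb'x
  have hbeq : b = x := by
    by_contra hne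
    have h0 : 0 < ‖b - x‖ := by
      rw [norm_pos_iff]; exact sub_ne_zero.mpr hne
    have := hkey (min ‖b - x‖ s) (lt_min h0 hs) (min_le_right _ _)
    exact lt_irrefl _ (lt_of_lt_of_le this (min_le_left _ _))
  rwa [← hbeq]

lemma sep {A B : Set (Euc d)} {r s : ℝ} (hr : 0 < r)
    (hA : ∀ y, (A ∩ ball y r).Subsingleton)
    (hs : 0 < s) (hB : ∀ y, (B ∩ ball y s).Subsingleton)
    (h : ∀ ε : ℝ, 0 < ε → ε ≤ 1/4 → ∃ u u' : Euc d, ‖u‖ < ε ∧ ‖u'‖ < ε ∧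
      ∃ ρ : ℝ, 1/ε ≤ ρ ∧ tr A u ∩ ball 0 ρ = tr B u' ∩ ball 0 ρ) : A = B := by
  refine Set.Subset.antisymm (sep_subset hs hB h) (sep_subset hr hA ?_)
  intro ε hε hε4
  obtain ⟨u, u', h1, h2, ρ, h3, heq⟩ := h ε hε hε4
  exact ⟨u', u, h2, h1, ρ, h3, heq.symm⟩

lemma sep_of_close {A B : Set (Euc d)}
    (hA : ∃ r > (0:ℝ), ∀ y, (A ∩ ball y r).Subsingleton)
    (hB : ∃ r > (0:ℝ), ∀ y, (B ∩ ball y r).Subsingleton)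
    (h : ∀ ε > (0:ℝ), ∃ C, deloneDist A C < ε ∧ deloneDist B C < ε) : A = B := by
  obtain ⟨r, hr, hAd⟩ := hA
  obtain ⟨s, hs, hBd⟩ := hB
  refine sep hr hAd hs hBd ?_
  intro ε hε hε4
  set η := ε/3 with hηdef
  have hη : 0 < η := by positivity
  have hη12 : η ≤ 1/12 := by rw [hηdef]; linarith
  have hηs : η < 1 / Real.sqrt 2 := by
    have := half_lt_inv_sqrt2
    linarith
  obtain ⟨C, hAC, hBC⟩ := h η hη
  obtain ⟨ε₁, hε₁m, hε₁η⟩ := exists_approx_lt hAC hηs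
  obtain ⟨ε₂, hε₂m, hε₂η⟩ := exists_approx_lt hBC hηs
  obtain ⟨hε₁I, u, hu, w, hw, heq1⟩ := hε₁m
  obtain ⟨hε₂I, u', hu', w', hw', heq2⟩ := hε₂m
  rw [mem_ball_zero_iff] at hu hw hu' hw'
  have hε₁0 : 0 < ε₁ := hε₁I.1
  have hε₂0 : 0 < ε₂ := hε₂I.1
  -- restrict both equalities to the ball of radius 1/η
  have hr1 : tr A u ∩ ball 0 (1/η) = tr C w ∩ ball 0 (1/η) :=
    restrict_ball heq1 (one_div_le_one_div_of_le hε₁0 hε₁η.le)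
  have hr2 : tr B u' ∩ ball 0 (1/η) = tr C w' ∩ ball 0 (1/η) :=
    restrict_ball heq2 (one_div_le_one_div_of_le hε₂0 hε₂η.le)
  set σ := 1/η - 2*η with hσdef
  have hησ : σ ≤ 1/η := by
    have : 0 < 2*η := by linarith
    linarith
  have hwsub : ‖w' - w‖ < 2*η := by
    calc ‖w' - w‖ ≤ ‖w'‖ + ‖w‖ := norm_sub_le w' w
      _ < 2*η := by linarith
  have h3 : tr A (u + (w' - w)) ∩ ball 0 σ = tr C w' ∩ ball 0 σ := by
    have := tr_ball_eq hr1 (w' - w) (σ := σ) (by linarith)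
    rw [tr_tr, tr_tr] at this
    rw [show w + (w' - w) = w' by abel] at this
    exact this
  have h4 : tr C w' ∩ ball 0 σ = tr B u' ∩ ball 0 σ := (restrict_ball hr2 hησ).symm
  refine ⟨u + (w' - w), u', ?_, ?_, σ, ?_, h3.trans h4⟩
  · calc ‖u + (w' - w)‖ ≤ ‖u‖ + ‖w' - w‖ := norm_add_le _ _
      _ < η + 2*η := by linarith
      _ = ε := by rw [hηdef]; ring
  · linarith
  · -- 1/ε ≤ 1/η - 2η  where η = ε/3
    rw [hσdef, hηdef]
    rw [show (1:ℝ)/(ε/3) = 3/ε by field_simp]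
    have h2 : 2*(ε/3) ≤ 2/ε := by
      rw [show 2*(ε/3) = (2*ε)/3 by ring, div_le_div_iff₀ (by norm_num : (0:ℝ) < 3) hε]
      nlinarith
    have h3 : (1:ℝ)/ε + 2/ε = 3/ε := by ring
    linarith

lemma trCont (v : Euc d) (ε : ℝ) (hε : 0 < ε) (hεs : ε < 1 / Real.sqrt 2) :
    ∃ δ > (0:ℝ), ∀ W Z : Set (Euc d), deloneDist W Z < δ →
      deloneDist (tr W v) (tr Z v) ≤ ε := by
  have hpos : (0:ℝ) < 1/ε + ‖v‖ := by positivity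
  refine ⟨min ε (1/(1/ε + ‖v‖)), lt_min hε (by positivity), ?_⟩
  intro W Z hWZ
  have hδε : min ε (1/(1/ε + ‖v‖)) ≤ ε := min_le_left _ _
  obtain ⟨ε₀, hε₀m, hε₀lt⟩ := exists_approx_lt hWZ (lt_of_le_of_lt hδε hεs)
  obtain ⟨hε₀I, a, ha, a', ha', heq⟩ := hε₀m
  rw [mem_ball_zero_iff] at ha ha'
  have hε₀0 : 0 < ε₀ := hε₀I.1
  have hε₀b : ε₀ ≤ 1/(1/ε + ‖v‖) := le_of_lt (lt_of_lt_of_le hε₀lt (min_le_right _ _))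
  have hbig : 1/ε + ‖v‖ ≤ 1/ε₀ := by
    have := one_div_le_one_div_of_le hε₀0 hε₀b
    rwa [one_div_one_div] at this
  have hkey := tr_ball_eq heq v (σ := 1/ε) hbig
  rw [tr_tr, tr_tr, show a + v = v + a by abel, show a' + v = v + a' by abel,
    ← tr_tr, ← tr_tr] at hkey
  have hmem : ε ∈ deloneApprox (tr W v) (tr Z v) := by
    refine ⟨⟨hε, hεs⟩, a, ?_, a', ?_, hkey⟩
    · rw [mem_ball_zero_iff]
      exact lt_of_lt_of_le (ha.trans hε₀lt) hδε
    · rw [mem_ball_zero_iff]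
      exact lt_of_lt_of_le (ha'.trans hε₀lt) hδε
  exact deloneDist_le hmem

lemma disc_of_delone {A : Set (Euc d)} (h : IsDelone A) :
    ∃ r > (0:ℝ), ∀ y, (A ∩ ball y r).Subsingleton := by
  obtain ⟨r, R, hr, _, hsub, _⟩ := h
  exact ⟨r, hr, hsub⟩

lemma step_lemma {Ω Ω₁ Ω₂ : Set (Set (Euc d))}
    (hΩinv : ∀ Y ∈ Ω, ∀ v : Euc d, tr Y v ∈ Ω)
    (hΩcomp : SeqCompactD Ω)
    (hmin : ∀ Y ∈ Ω, ∀ Z ∈ Ω, ∀ ε > (0 : ℝ), ∃ u : Euc d, deloneDist (tr Y u) Z < ε)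
    (hΩ₁del : ∀ Z ∈ Ω₁, IsDelone Z) (hΩ₂del : ∀ Z ∈ Ω₂, IsDelone Z)
    {φ₁ φ₂ : Set (Euc d) → Set (Euc d)}
    (hφ₁ : IsFactorOn Ω Ω₁ φ₁) (hφ₂ : IsFactorOn Ω Ω₂ φ₂)
    {v : Euc d} {A B : Set (Euc d)}
    (hA : A ∈ Ω) (hB : B ∈ Ω) (h1 : φ₁ A = φ₁ B) (h2 : φ₂ A = tr (φ₂ B) v) :
    ∃ A', A' ∈ Ω ∧ φ₁ A' = φ₁ A ∧ φ₂ A' = tr (φ₂ A) v := by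
  obtain ⟨hmem₁, -, hcont₁, heqv₁⟩ := hφ₁
  obtain ⟨hmem₂, -, hcont₂, heqv₂⟩ := hφ₂
  -- choose return times
  have hmin' : ∀ n : ℕ, ∃ u : Euc d, deloneDist (tr B u) A < 1/(n+1) := by
    intro n
    exact hmin B hB A hA (1/(n+1)) (by positivity)
  choose t ht using hmin'
  obtain ⟨A', hA', σ, hσ, hconv⟩ :=
    hΩcomp (fun n => tr A (t n)) (fun n => hΩinv A hA (t n))
  have hBconv : ∀ δ > (0:ℝ), ∃ N, ∀ n ≥ N, deloneDist (tr B (t (σ n))) A < δ := by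
    intro δ hδ
    obtain ⟨N, hN⟩ := exists_nat_gt (1/δ)
    refine ⟨N, fun n hn => ?_⟩
    refine lt_trans (ht (σ n)) ?_
    have h1n : (N:ℝ) ≤ (σ n : ℝ) := by
      exact_mod_cast le_trans hn (hσ.le_apply)
    rw [div_lt_iff₀ (by positivity)]
    rw [div_lt_iff₀ hδ] at hN
    calc (1:ℝ) < N * δ := hN
      _ ≤ ((σ n : ℝ) + 1) * δ := by
          apply mul_le_mul_of_nonneg_right _ hδ.le
          linarith
      _ = δ * ((σ n : ℝ) + 1) := by ring
  -- the φ₁ equation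
  have hph1 : φ₁ A' = φ₁ A := by
    apply sep_of_close (disc_of_delone (hΩ₁del _ (hmem₁ A' hA')))
      (disc_of_delone (hΩ₁del _ (hmem₁ A hA)))
    intro ε hε
    obtain ⟨δ₁, hδ₁, hc₁⟩ := hcont₁ A' hA' ε hε
    obtain ⟨δ₂, hδ₂, hc₂⟩ := hcont₁ A hA ε hε
    obtain ⟨N₁, hN₁⟩ := hconv δ₁ hδ₁
    obtain ⟨N₂, hN₂⟩ := hBconv δ₂ hδ₂
    set n := max N₁ N₂ with hn
    refine ⟨φ₁ (tr A (t (σ n))), ?_, ?_⟩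
    · apply hc₁ _ (hΩinv A hA _)
      rw [deloneDist_symm]
      exact hN₁ n (le_max_left _ _)
    · have he : φ₁ (tr A (t (σ n))) = φ₁ (tr B (t (σ n))) := by
        rw [heqv₁ A hA, heqv₁ B hB, h1]
      rw [he]
      apply hc₂ _ (hΩinv B hB _)
      rw [deloneDist_symm]
      exact hN₂ n (le_max_right _ _)
  -- the φ₂ equation
  have htrAv : tr A v ∈ Ω := hΩinv A hA v
  have hph2 : φ₂ A' = tr (φ₂ A) v := by
    have htreq : tr (φ₂ A) v = φ₂ (tr A v) := (heqv₂ A hA v).symm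
    rw [htreq]
    apply sep_of_close (disc_of_delone (hΩ₂del _ (hmem₂ A' hA')))
      (disc_of_delone (hΩ₂del _ (hmem₂ _ htrAv)))
    intro ε hε
    obtain ⟨δ₁, hδ₁, hc₁⟩ := hcont₂ A' hA' ε hε
    obtain ⟨δ₂, hδ₂, hc₂⟩ := hcont₂ (tr A v) htrAv ε hε
    have hε₃ : (0:ℝ) < min (δ₂/2) (1/2) := lt_min (by linarith) (by norm_num)
    have hε₃s : min (δ₂/2) (1/2) < 1 / Real.sqrt 2 :=
      lt_of_le_of_lt (min_le_right _ _) half_lt_inv_sqrt2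
    obtain ⟨δ₃, hδ₃, hc₃⟩ := trCont v (min (δ₂/2) (1/2)) hε₃ hε₃s
    obtain ⟨N₁, hN₁⟩ := hconv δ₁ hδ₁
    obtain ⟨N₂, hN₂⟩ := hBconv δ₃ hδ₃
    set n := max N₁ N₂ with hn
    refine ⟨φ₂ (tr A (t (σ n))), ?_, ?_⟩
    · apply hc₁ _ (hΩinv A hA _)
      rw [deloneDist_symm]
      exact hN₁ n (le_max_left _ _)
    · have he : φ₂ (tr A (t (σ n))) = φ₂ (tr (tr B (t (σ n))) v) := by
        rw [heqv₂ A hA, h2, heqv₂ (tr B (t (σ n))) (hΩinv B hB _), heqv₂ B hB,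
          tr_tr, tr_tr, add_comm]
      rw [he]
      apply hc₂ _ (hΩinv (tr B (t (σ n))) (hΩinv B hB _) v)
      have hd3 := hc₃ _ _ (hN₂ n (le_max_right _ _))
      rw [deloneDist_symm] at hd3
      calc deloneDist (tr A v) (tr (tr B (t (σ n))) v) ≤ min (δ₂/2) (1/2) := hd3
        _ < δ₂ := lt_of_le_of_lt (min_le_left _ _) (by linarith)
  exact ⟨A', hA', hph1, hph2⟩

end DeloneAux

/-- Proposition: coincidence of fibers forces trivial translation.
Let `Ω` be a compact translation-invariant set of Delone sets on which the translation
action is minimal, and `φ₁ : Ω → Ω₁`, `φ₂ : Ω → Ω₂` factor maps onto Delone systems.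
If every element of `Ω₂` is non-periodic and `φ₁` is finite-to-one, then
`φ₁(X) = φ₁(Y)` and `φ₂(X) = φ₂(Y - v)` imply `v = 0`. -/

theorem coincidence_no_translation {d : ℕ} (hd : 0 < d)
    (Ω Ω₁ Ω₂ : Set (Set (Euc d)))
    (hΩdel : ∀ Y ∈ Ω, IsDelone Y)
    (hΩinv : ∀ Y ∈ Ω, ∀ v : Euc d, tr Y v ∈ Ω)
    (hΩcomp : SeqCompactD Ω)
    (hmin : ∀ Y ∈ Ω, ∀ Z ∈ Ω, ∀ ε > (0 : ℝ), ∃ v : Euc d, deloneDist (tr Y v) Z < ε)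
    (hΩ₁ : IsDeloneSystem Ω₁) (hΩ₂ : IsDeloneSystem Ω₂)
    (φ₁ φ₂ : Set (Euc d) → Set (Euc d))
    (hφ₁ : IsFactorOn Ω Ω₁ φ₁) (hφ₂ : IsFactorOn Ω Ω₂ φ₂)
    (hnp : ∀ Z ∈ Ω₂, NonPeriodic Z)
    (hfto : ∀ Z ∈ Ω₁, {Y | Y ∈ Ω ∧ φ₁ Y = Z}.Finite)
    (X Y : Set (Euc d)) (hX : X ∈ Ω) (hY : Y ∈ Ω) (v : Euc d)
    (h1 : φ₁ X = φ₁ Y) (h2 : φ₂ X = φ₂ (tr Y v)) : v = 0 := by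
  classical
  have hstep := fun (A B : Set (Euc d)) (hA : A ∈ Ω) (hB : B ∈ Ω)
      (e1 : φ₁ A = φ₁ B) (e2 : φ₂ A = tr (φ₂ B) v) =>
    DeloneAux.step_lemma hΩinv hΩcomp hmin hΩ₁.1 hΩ₂.1 hφ₁ hφ₂ hA hB e1 e2
  have h2' : φ₂ X = tr (φ₂ Y) v := by rw [h2, hφ₂.2.2.2 Y hY]
  -- build the sequence of preimages by induction
  have hseq : ∀ n : ℕ, ∃ W, (W ∈ Ω ∧ φ₁ W = φ₁ X ∧ φ₂ W = tr (φ₂ X) (n • v)) ∧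
      ∃ B, B ∈ Ω ∧ φ₁ W = φ₁ B ∧ φ₂ W = tr (φ₂ B) v := by
    intro n
    induction n with
    | zero =>
        refine ⟨X, ⟨hX, rfl, ?_⟩, Y, hY, h1, h2'⟩
        rw [zero_smul, DeloneAux.tr_zero]
    | succ n ih =>
        obtain ⟨W, ⟨hW, hW1, hW2⟩, B, hBm, hWB1, hWB2⟩ := ih
        obtain ⟨W', hW', hW'1, hW'2⟩ := hstep W B hW hBm hWB1 hWB2
        refine ⟨W', ⟨hW', hW'1.trans hW1, ?_⟩, W, hW, hW'1, hW'2⟩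
        rw [hW'2, hW2, DeloneAux.tr_tr, ← succ_nsmul]
  choose g hg using hseq
  have hgΩ : ∀ n, g n ∈ Ω := fun n => (hg n).1.1
  have hg1 : ∀ n, φ₁ (g n) = φ₁ X := fun n => (hg n).1.2.1
  have hg2 : ∀ n, φ₂ (g n) = tr (φ₂ X) (n • v) := fun n => (hg n).1.2.2
  -- pigeonhole on the finite fiber
  have hfin := hfto (φ₁ X) (hφ₁.1 X hX)
  have hninj : ¬ Function.Injective g := by
    intro hinj
    exact (Set.infinite_of_injective_forall_mem hinj
      (fun n => (⟨hgΩ n, hg1 n⟩ : g n ∈ {Y | Y ∈ Ω ∧ φ₁ Y = φ₁ X}))) hfin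
  obtain ⟨m, n, hgeq, hmn⟩ := Function.not_injective_iff.mp hninj
  have key : ∀ m n : ℕ, m < n → g m = g n → v = 0 := by
    intro m n hlt hgmn
    have he : tr (φ₂ X) (m • v) = tr (φ₂ X) (n • v) := by
      rw [← hg2 m, ← hg2 n, hgmn]
    have hW : tr (φ₂ (g m)) ((n - m) • v) = φ₂ (g m) := by
      calc tr (φ₂ (g m)) ((n - m) • v)
          = tr (tr (φ₂ X) (m • v)) ((n - m) • v) := by rw [hg2 m]
        _ = tr (φ₂ X) (m • v + (n - m) • v) := DeloneAux.tr_tr _ _ _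
        _ = tr (φ₂ X) (n • v) := by rw [← add_nsmul, Nat.add_sub_cancel' hlt.le]
        _ = tr (φ₂ X) (m • v) := he.symm
        _ = φ₂ (g m) := (hg2 m).symm
    have hz := hnp (φ₂ (g m)) (hφ₂.1 (g m) (hgΩ m)) _ hW
    have hcast : ((n - m : ℕ) : ℝ) • v = 0 := by
      rw [Nat.cast_smul_eq_nsmul]; exact hz
    rcases smul_eq_zero.mp hcast with hc | hc
    · exact absurd (Nat.cast_eq_zero.mp hc) (Nat.sub_ne_zero_of_lt hlt)
    · exact hc
  rcases hmn.lt_or_gt with hltc | hltc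
  · exact key m n hltc hgeq
  · exact key n m hltc hgeq.symm
end

section
/- Let G be ℝ^d or ℤ^d, and let G act continuously on compact metric spaces X, X₁, X₂ such that the action on X is minimal (every orbit is dense). Let φ₁ : X → X₁ and φ₂ : X → X₂ be factor maps (continuous, surjective, G-equivariant). Suppose the action of G on X₂ is free (g·z = z for some z ∈ X₂ implies g = 0) and φ₁ is finite-to-one (all fibers of φ₁ are finite). If x, y ∈ X and g ∈ G satisfy φ₁(x) = φ₁(y) and φ₂(x) = φ₂(g·y), then g is the identity element of G. -/
lemma chain_aux {α : Type*} (R : α → α → Prop) (a b : α) (hab : R a b)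
    (hstep : ∀ u v, R u v → ∃ c, R c u) :
    ∃ X : ℕ → α, X 0 = a ∧ ∀ n, R (X (n + 1)) (X n) := by
  choose f hf using hstep
  let s : ℕ → {p : α × α // R p.1 p.2} := fun n =>
    Nat.rec ⟨(a, b), hab⟩ (fun _ q => ⟨(f q.1.1 q.1.2 q.2, q.1.1), hf _ _ _⟩) n
  exact ⟨fun n => (s n).1.1, rfl, fun n => (s (n + 1)).2⟩


/-- generalization to `ℝ^d` or `ℤ^d` actions.
Let `G` be `ℝ^d` or `ℤ^d` (up to topological group isomorphism), acting continuously on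
compact metric spaces `Xs`, `X₁`, `X₂`, the action on `Xs` being minimal. Let
`φ₁ : Xs → X₁`, `φ₂ : Xs → X₂` be factor maps, with the action on `X₂` free and `φ₁`
finite-to-one. If `φ₁ x = φ₁ y` and `φ₂ x = φ₂ (g • y)`, then `g = 0`. -/
theorem coincidence_no_translation_general {d : ℕ} (hd : 0 < d)
    (G : Type*) [AddCommGroup G] [TopologicalSpace G]
    (hG : (∃ e : G ≃+ EuclideanSpace ℝ (Fin d), Continuous (⇑e) ∧ Continuous (⇑e.symm)) ∨
          (∃ e : G ≃+ (Fin d → ℤ), Continuous (⇑e) ∧ Continuous (⇑e.symm)))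
    (Xs X₁ X₂ : Type*)
    [MetricSpace Xs] [CompactSpace Xs]
    [MetricSpace X₁] [CompactSpace X₁]
    [MetricSpace X₂] [CompactSpace X₂]
    (μ : G → Xs → Xs) (μ₁ : G → X₁ → X₁) (μ₂ : G → X₂ → X₂)
    -- continuous actions
    (hμc : Continuous fun p : G × Xs => μ p.1 p.2)
    (hμ0 : ∀ x : Xs, μ 0 x = x) (hμadd : ∀ (g h : G) (x : Xs), μ (g + h) x = μ g (μ h x))
    (hμ₁c : Continuous fun p : G × X₁ => μ₁ p.1 p.2)
    (hμ₁0 : ∀ x : X₁, μ₁ 0 x = x) (hμ₁add : ∀ (g h : G) (x : X₁), μ₁ (g + h) x = μ₁ g (μ₁ h x))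
    (hμ₂c : Continuous fun p : G × X₂ => μ₂ p.1 p.2)
    (hμ₂0 : ∀ x : X₂, μ₂ 0 x = x) (hμ₂add : ∀ (g h : G) (x : X₂), μ₂ (g + h) x = μ₂ g (μ₂ h x))
    -- minimality of (Xs, G)
    (hmin : ∀ x : Xs, Dense (Set.range fun g : G => μ g x))
    -- factor maps
    (φ₁ : Xs → X₁) (φ₂ : Xs → X₂)
    (hφ₁c : Continuous φ₁) (hφ₁s : Function.Surjective φ₁)
    (hφ₁e : ∀ (g : G) (x : Xs), φ₁ (μ g x) = μ₁ g (φ₁ x))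
    (hφ₂c : Continuous φ₂) (hφ₂s : Function.Surjective φ₂)
    (hφ₂e : ∀ (g : G) (x : Xs), φ₂ (μ g x) = μ₂ g (φ₂ x))
    -- the action on X₂ is free
    (hfree : ∀ (g : G) (z : X₂), μ₂ g z = z → g = 0)
    -- φ₁ is finite-to-one
    (hfto : ∀ z : X₁, (φ₁ ⁻¹' {z}).Finite)
    (x y : Xs) (g : G) (h1 : φ₁ x = φ₁ y) (h2 : φ₂ x = φ₂ (μ g y)) : g = 0 := by
  classical
  have cont_mu : ∀ h : G, Continuous (μ h) := fun h =>
    hμc.comp (continuous_const.prodMk continuous_id)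
  -- key step: propagate the relation
  set R : Xs → Xs → Prop := fun u v => φ₁ u = φ₁ v ∧ φ₂ u = φ₂ (μ g v) with hR
  have key : ∀ a b, R a b → ∃ c, R c a := by
    rintro a b ⟨hab1, hab2⟩
    obtain ⟨u, hu, hulim⟩ := mem_closure_iff_seq_limit.mp (hmin b a)
    choose gs hgs' using hu
    have hgs : ∀ n, μ (gs n) b = u n := hgs'
    obtain ⟨c, -, ψ, hψ, hvlim⟩ :=
      IsCompact.tendsto_subseq (isCompact_univ (X := Xs))
        (fun n => Set.mem_univ (μ (gs n) a))
    refine ⟨c, ?_, ?_⟩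
    · have l1 : Filter.Tendsto (fun n => φ₁ (μ (gs (ψ n)) a)) Filter.atTop (nhds (φ₁ c)) :=
        (hφ₁c.continuousAt.tendsto.comp hvlim)
      have l2 : Filter.Tendsto (fun n => φ₁ (μ (gs (ψ n)) a)) Filter.atTop (nhds (φ₁ a)) := by
        have : (fun n => φ₁ (μ (gs (ψ n)) a)) = fun n => φ₁ (u (ψ n)) := by
          funext n
          rw [hφ₁e, hab1, ← hφ₁e, hgs]
        rw [this]
        exact hφ₁c.continuousAt.tendsto.comp (hulim.comp hψ.tendsto_atTop)
      exact tendsto_nhds_unique l1 l2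
    · have l1 : Filter.Tendsto (fun n => φ₂ (μ (gs (ψ n)) a)) Filter.atTop (nhds (φ₂ c)) :=
        (hφ₂c.continuousAt.tendsto.comp hvlim)
      have l2 : Filter.Tendsto (fun n => φ₂ (μ (gs (ψ n)) a)) Filter.atTop
          (nhds (φ₂ (μ g a))) := by
        have heq : (fun n => φ₂ (μ (gs (ψ n)) a)) = fun n => φ₂ (μ g (u (ψ n))) := by
          funext n
          rw [hφ₂e, hab2, ← hφ₂e, ← hμadd, add_comm, hμadd, hgs]
        rw [heq]
        exact ((hφ₂c.comp (cont_mu g)).continuousAt.tendsto.comp (hulim.comp hψ.tendsto_atTop))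
      exact tendsto_nhds_unique l1 l2
  obtain ⟨X, hX0, hXstep⟩ := chain_aux R x y ⟨h1, h2⟩ key
  -- properties of the sequence
  have hfib : ∀ n, φ₁ (X n) = φ₁ x := by
    intro n
    induction n with
    | zero => rw [hX0]
    | succ k ih => rw [(hXstep k).1, ih]
  have hz : ∀ n, φ₂ (X n) = μ₂ (n • g) (φ₂ x) := by
    intro n
    induction n with
    | zero => rw [hX0, zero_smul, hμ₂0]
    | succ k ih =>
        rw [(hXstep k).2, hφ₂e, ih, ← hμ₂add, succ_nsmul, add_comm]
  -- pigeonhole in the finite fiber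
  haveI := (hfto (φ₁ x)).to_subtype
  obtain ⟨i, j, hij, hfe⟩ :=
    Finite.exists_ne_map_eq_of_infinite (fun n : ℕ => (⟨X n, hfib n⟩ : φ₁ ⁻¹' {φ₁ x}))
  wlog hlt : i < j generalizing i j
  · exact this j i hij.symm hfe.symm (hij.lt_or_gt.resolve_left hlt)
  have hXij : X i = X j := congrArg Subtype.val hfe
  obtain ⟨n, hn⟩ : ∃ n, j = i + (n + 1) := ⟨j - i - 1, by omega⟩
  have hper : μ₂ ((n + 1) • g) (μ₂ (i • g) (φ₂ x)) = μ₂ (i • g) (φ₂ x) := by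
    rw [← hμ₂add, ← add_nsmul]
    have := (hz j).symm.trans (congrArg φ₂ hXij.symm)
    rw [hz i] at this
    rw [add_comm (n+1) i, ← hn]
    exact this
  have hng : (n + 1) • g = 0 := hfree _ _ hper
  -- torsion-freeness of ℝ^d and ℤ^d
  rcases hG with ⟨e, -, -⟩ | ⟨e, -, -⟩
  · have h0 : (n + 1) • e g = 0 := by rw [← map_nsmul, hng, map_zero]
    rw [← Nat.cast_smul_eq_nsmul ℝ, smul_eq_zero] at h0
    have : e g = 0 := h0.resolve_left (by positivity)
    exact e.injective (by rw [this, map_zero])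
  · have h0 : (n + 1) • e g = 0 := by rw [← map_nsmul, hng, map_zero]
    rw [← Nat.cast_smul_eq_nsmul ℤ, smul_eq_zero] at h0
    have : e g = 0 := h0.resolve_left (by positivity)
    exact e.injective (by rw [this, map_zero])
end

section
/- Let X be an (r,R)-Delone set in ℝ^d. Then for every x ∈ X, the Voronoi cell of x is determined by the points of X within distance 4R of x: V_x = {y ∈ ℝ^d : ‖x − y‖ ≤ ‖x' − y‖ for every x' ∈ X ∩ B_{4R}(x)}. -/
open Metric Set
open scoped Pointwise

/-- Lemma: the Voronoi cell of `x ∈ X` is determined by `X ∩ B_{4R}(x)`. -/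
theorem voronoi_locally_determined {d : ℕ} (hd : 0 < d) (r R : ℝ) (X : Set (Euc d))
    (hX : IsDeloneWith r R X) (x : Euc d) (hx : x ∈ X) :
    Vor X x = {y : Euc d | ∀ x' ∈ X ∩ ball x (4 * R), ‖x - y‖ ≤ ‖x' - y‖} := by
  obtain ⟨hr, hR, hsub, hcov⟩ := hX
  ext y
  simp only [Vor, Set.mem_setOf_eq, Set.mem_inter_iff]
  constructor
  · intro h x' hx'
    exact h x' hx'.1
  · intro h x' hx'
    have key : ‖x - y‖ ≤ 2 * R := by
      by_contra hgt
      push_neg at hgt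
      set n := ‖x - y‖ with hn_def
      have hn : 0 < n := lt_trans (by positivity) hgt
      set t : ℝ := 2 * R / n with ht_def
      have ht0 : 0 < t := by positivity
      have ht1 : t < 1 := (div_lt_one hn).2 hgt
      set p : Euc d := x + t • (y - x) with hp_def
      obtain ⟨z, hzX, hzp⟩ := hcov p
      have hpz : ‖z - p‖ ≤ R := by
        rw [← dist_eq_norm]; exact mem_closedBall.1 hzp
      have hyx : ‖y - x‖ = n := by rw [hn_def, norm_sub_rev]
      have hpx : ‖p - x‖ = 2 * R := by
        have : p - x = t • (y - x) := by rw [hp_def]; abel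
        rw [this, norm_smul, Real.norm_eq_abs, abs_of_pos ht0, hyx, ht_def]
        field_simp
      have hpy : ‖y - p‖ = n - 2 * R := by
        have h1 : y - p = (1 - t) • (y - x) := by
          rw [hp_def]; rw [sub_smul, one_smul]; abel
        rw [h1, norm_smul, Real.norm_eq_abs, abs_of_pos (by linarith), hyx, ht_def]
        field_simp
      have hz4 : z ∈ ball x (4 * R) := by
        rw [mem_ball, dist_eq_norm]
        calc ‖z - x‖ ≤ ‖z - p‖ + ‖p - x‖ := norm_sub_le_norm_sub_add_norm_sub z p x
          _ ≤ R + 2 * R := by rw [hpx]; linarith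
          _ < 4 * R := by linarith
      have hle := h z ⟨hzX, hz4⟩
      have hzy : ‖z - y‖ ≤ n - R := by
        calc ‖z - y‖ ≤ ‖z - p‖ + ‖p - y‖ := norm_sub_le_norm_sub_add_norm_sub z p y
          _ = ‖z - p‖ + ‖y - p‖ := by rw [norm_sub_rev p y]
          _ ≤ R + (n - 2 * R) := by linarith
          _ = n - R := by ring
      linarith
    by_cases hc : x' ∈ ball x (4 * R)
    · exact h x' ⟨hx', hc⟩
    · have h4 : 4 * R ≤ ‖x' - x‖ := by
        rw [← dist_eq_norm]
        exact le_of_not_gt (by simpa [mem_ball] using hc)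
      have htri : ‖x' - x‖ ≤ ‖x' - y‖ + ‖y - x‖ := norm_sub_le_norm_sub_add_norm_sub x' y x
      have hyx : ‖y - x‖ = ‖x - y‖ := norm_sub_rev y x
      linarith
end

section
/- Let X be an (r₀,R₀)-Delone set in ℝ^d. If y₁, y₂ ∈ ℝ^d, a ∈ ℝ^d and R > R₀ are such that (X − y₁) ∩ B_R(a) = (X − y₂) ∩ B_R(a), then either y₁ = y₂ or ‖y₁ − y₂‖ ≥ r₀/2. -/
open Metric Set
open scoped Pointwise

/-- two translates of a Delone set agreeing on a large ball are either equal
translates or differ by at least `r₀/2`. -/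
theorem translates_agreeing_on_ball {d : ℕ} (hd : 0 < d) (r₀ R₀ : ℝ) (X : Set (Euc d))
    (hX : IsDeloneWith r₀ R₀ X) (y₁ y₂ a : Euc d) (R : ℝ) (hR : R₀ < R)
    (h : tr X y₁ ∩ ball a R = tr X y₂ ∩ ball a R) :
    y₁ = y₂ ∨ r₀ / 2 ≤ ‖y₁ - y₂‖ := by
  obtain ⟨hr₀, hR₀, hsep, hdense⟩ := hX
  by_cases hle : r₀ / 2 ≤ ‖y₁ - y₂‖
  · exact Or.inr hle
  left
  push_neg at hle
  -- find x ∈ X ∩ closedBall (a + y₁) R₀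
  obtain ⟨x, hxX, hxball⟩ := hdense (a + y₁)
  have hx1 : x - y₁ ∈ tr X y₁ ∩ ball a R := by
    refine ⟨⟨x, hxX, rfl⟩, ?_⟩
    rw [mem_ball, dist_eq_norm]
    calc ‖x - y₁ - a‖ = ‖x - (a + y₁)‖ := by rw [sub_sub, add_comm y₁ a]
      _ ≤ R₀ := by
          rw [mem_closedBall, dist_eq_norm] at hxball; exact hxball
      _ < R := hR
  rw [h] at hx1
  obtain ⟨⟨x', hx'X, hx'eq⟩, _⟩ := hx1
  have hxx' : x' = x + (y₂ - y₁) := by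
    have : x' - y₂ = x - y₁ := hx'eq
    have := congrArg (· + y₂) this
    simp at this
    rw [this]; abel
  have hx'ball : x' ∈ ball x r₀ := by
    rw [mem_ball, dist_eq_norm, hxx']
    have : x + (y₂ - y₁) - x = -(y₁ - y₂) := by abel
    rw [this, norm_neg]
    linarith [half_le_self hr₀.le, norm_nonneg (y₁ - y₂)]
  have hxball' : x ∈ ball x r₀ := mem_ball_self hr₀
  have := hsep x ⟨hxX, hxball'⟩ ⟨hx'X, hx'ball⟩
  have h0 : y₂ - y₁ = 0 := by
    have := congrArg (· - x) this
    simp [hxx'] at this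
    exact this.symm
  have := sub_eq_zero.mp h0
  exact this.symm
end
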